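/- Let G be a finite connected locally connected graph of diameter two, let x be a vertex, and let u, v be two distinct vertices, both different from x, with line(x,u) = line(x,v). Then u and v are both adjacent to x and d(u,v) = 2. -/
import Mathlib


open SimpleGraph

/-- The line defined by two vertices `a` and `b` of a graph: `{a, b}` together with all
vertices `c` lying on a shortest path through `a`, `b` and `c` (in some order). -/
def SimpleGraph.line {V : Type*} (G : SimpleGraph V) (a b : V) : Set V :=
  {a, b} ∪ {c | G.dist a b = G.dist a c + G.dist c b ∨
                G.dist a c = G.dist a b + G.dist b c ∨
                G.dist b c = G.dist b a + G.dist a c}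

/-- The set of all lines of a graph. -/
def SimpleGraph.lineSet {V : Type*} (G : SimpleGraph V) : Set (Set V) :=
  {s | ∃ a b : V, a ≠ b ∧ s = G.line a b}

/-- A graph is locally connected if the subgraph induced on each neighborhood is connected. -/
def SimpleGraph.LocallyConnected {V : Type*} (G : SimpleGraph V) : Prop :=
  ∀ v : V, (G.induce (G.neighborSet v)).Connected

lemma mem_line_iff {V : Type*} (G : SimpleGraph V) (a b c : V) :
    c ∈ G.line a b ↔ c = a ∨ c = b ∨
      (G.dist a b = G.dist a c + G.dist c b ∨
       G.dist a c = G.dist a b + G.dist b c ∨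
       G.dist b c = G.dist b a + G.dist a c) := by
  simp [SimpleGraph.line, or_assoc]

/-- In a locally connected graph, if `a` and `b` are distinct neighbors of `v`,
then `a` has a neighbor which is also a neighbor of `v`. -/
lemma exists_common_nb {V : Type*} (G : SimpleGraph V) (hlc : G.LocallyConnected)
    {v a b : V} (ha : G.Adj v a) (hb : G.Adj v b) (hab : a ≠ b) :
    ∃ w : V, G.Adj v w ∧ G.Adj a w := by
  have ha' : a ∈ G.neighborSet v := ha
  have hb' : b ∈ G.neighborSet v := hb
  obtain ⟨p⟩ := (hlc v).preconnected ⟨a, ha'⟩ ⟨b, hb'⟩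
  have hne : (⟨a, ha'⟩ : G.neighborSet v) ≠ ⟨b, hb'⟩ := by simpa using hab
  have hnn : ¬ p.Nil := SimpleGraph.Walk.not_nil_of_ne hne
  have hadj := SimpleGraph.Walk.adj_snd hnn
  exact ⟨(p.getVert 1).1, (p.getVert 1).2, by simpa using hadj⟩

/-- Ruling out the mixed case: `d x u = 2`, `d x v = 1`. -/
lemma mixed_case_aux {V : Type*} [Fintype V] (G : SimpleGraph V)
    (hG : G.Connected) (hlc : G.LocallyConnected)
    (hle : ∀ a b : V, G.dist a b ≤ 2)
    {x u v : V} (hux : u ≠ x) (huv : u ≠ v)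
    (h : G.line x u = G.line x v)
    (hxu2 : G.dist x u = 2) (hxv1 : G.dist x v = 1) : False := by
  have dcomm : ∀ a b : V, G.dist a b = G.dist b a := fun a b => SimpleGraph.dist_comm
  have exv := dcomm x v
  have exu := dcomm x u
  have euv := dcomm u v
  have hxvadj : G.Adj x v := dist_eq_one_iff_adj.mp hxv1
  -- u ∈ line x v, deduce Adj v u
  have hu : u ∈ G.line x v := by rw [← h, mem_line_iff]; tauto
  have hvu : G.Adj v u := by
    have hlevu := hle v u
    rw [mem_line_iff] at hu
    rcases hu with h1 | h1 | h1 | h1 | h1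
    · exact absurd h1 hux
    · exact absurd h1 huv
    · omega
    · exact (dist_eq_one_iff_adj.mp (show G.dist v u = 1 by omega)).symm.symm
    · omega
  obtain ⟨w, hvw, huw⟩ := exists_common_nb G hlc hvu hxvadj.symm hux
  have hwu : G.dist u w = 1 := dist_eq_one_iff_adj.mpr huw
  have hwv : G.dist v w = 1 := dist_eq_one_iff_adj.mpr hvw
  have euw := dcomm u w
  have evw := dcomm v w
  have exw := dcomm x w
  have hwx : w ≠ x := by
    intro he
    rw [he] at huw
    have : G.dist x u = 1 := dist_eq_one_iff_adj.mpr huw.symm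
    omega
  have hwne : w ≠ u := huw.ne'
  have hwnev : w ≠ v := hvw.ne'
  have hxw_pos : G.dist x w ≠ 0 := (hG.dist_eq_zero_iff).ne.mpr (Ne.symm hwx)
  have hxw_le : G.dist x w ≤ 2 := hle x w
  rcases (by omega : G.dist x w = 1 ∨ G.dist x w = 2) with hxw | hxw
  · -- w is a common neighbor of x and u, so w ∈ line x u but w ∉ line x v
    have hw_in : w ∈ G.line x u := by
      rw [mem_line_iff]
      right; right; left
      omega
    rw [h, mem_line_iff] at hw_in
    rcases hw_in with h1 | h1 | h1 | h1 | h1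
    · exact hwx h1
    · exact hwnev h1
    · omega
    · omega
    · omega
  · -- d x w = 2, w adj v : w ∈ line x v but w ∉ line x u
    have hw_in : w ∈ G.line x v := by
      rw [mem_line_iff]
      right; right; right; left
      omega
    rw [← h, mem_line_iff] at hw_in
    rcases hw_in with h1 | h1 | h1 | h1 | h1
    · exact hwx h1
    · exact hwne h1
    · omega
    · omega
    · omega

theorem diam_two_equal_lines {V : Type*} [Fintype V] (G : SimpleGraph V)
    (hG : G.Connected) (hlc : G.LocallyConnected) (hdiam : G.diam = 2)
    {x u v : V} (hux : u ≠ x) (hvx : v ≠ x) (huv : u ≠ v)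
    (h : G.line x u = G.line x v) :
    G.Adj x u ∧ G.Adj x v ∧ G.dist u v = 2 := by
  have dcomm : ∀ a b : V, G.dist a b = G.dist b a := fun a b => SimpleGraph.dist_comm
  have exv := dcomm x v
  have exu := dcomm x u
  have euv := dcomm u v
  have hle : ∀ a b : V, G.dist a b ≤ 2 := by
    intro a b
    have := SimpleGraph.dist_le_diam
      (G := G) (ediam_ne_top_of_diam_ne_zero (by rw [hdiam]; norm_num)) (u := a) (v := b)
    omega
  have hxu_pos : G.dist x u ≠ 0 := (hG.dist_eq_zero_iff).ne.mpr (Ne.symm hux)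
  have hxv_pos : G.dist x v ≠ 0 := (hG.dist_eq_zero_iff).ne.mpr (Ne.symm hvx)
  have huv_pos : G.dist u v ≠ 0 := (hG.dist_eq_zero_iff).ne.mpr huv
  have hxu_le := hle x u
  have hxv_le := hle x v
  have huv_le := hle u v
  -- rule out d x u = 2
  have hxu1 : G.dist x u = 1 := by
    rcases (by omega : G.dist x u = 1 ∨ G.dist x u = 2) with h1 | h1
    · exact h1
    rcases (by omega : G.dist x v = 1 ∨ G.dist x v = 2) with h2 | h2
    · exact absurd (mixed_case_aux G hG hlc hle hux huv h h1 h2) (by simp)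
    · -- both at distance 2: v ∈ line x u gives contradiction
      exfalso
      have hv : v ∈ G.line x u := by rw [h, mem_line_iff]; tauto
      rw [mem_line_iff] at hv
      rcases hv with h3 | h3 | h3 | h3 | h3
      · exact hvx h3
      · exact huv h3.symm
      · omega
      · omega
      · omega
  have hxv1 : G.dist x v = 1 := by
    rcases (by omega : G.dist x v = 1 ∨ G.dist x v = 2) with h2 | h2
    · exact h2
    · exact absurd (mixed_case_aux G hG hlc hle hvx huv.symm h.symm h2 hxu1) (by simp)
  refine ⟨dist_eq_one_iff_adj.mp hxu1, dist_eq_one_iff_adj.mp hxv1, ?_⟩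
  rcases (by omega : G.dist u v = 1 ∨ G.dist u v = 2) with h1 | h1
  · -- u adj v : then v ∉ line x u, contradiction
    exfalso
    have hv : v ∈ G.line x u := by rw [h, mem_line_iff]; tauto
    rw [mem_line_iff] at hv
    have evu := dcomm v u
    rcases hv with h3 | h3 | h3 | h3 | h3
    · exact hvx h3
    · exact huv h3.symm
    · omega
    · omega
    · omega
  · exact h1
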